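/- Let N+ be a rooted binary phylogenetic network on a set of exactly 4 taxa {a,b,c,d} that is a T-quartet, with associated resolved quartet ab|cd (the quartet displayed on T_rd(N−)). Then every tree displayed on N+ has unrooted quartet topology ab|cd; equivalently, all displayed trees of N+ share the same resolved quartet topology. -/

import Mathlib

/-!
# Common framework

Finite directed multigraphs, undirected connectivity, numbers of connected
components, cut edges, subgraphs, blobs, blobs determined by leaf sets,
B-quartets, and quartets displayed via cut-edge separation.

A *network* is modelled as a finite directed multigraph (edge directions are
simply ignored for the undirected notions of connectivity, cut edges and
blobs).
-/

/-- A finite directed multigraph: finite types of nodes and of edges, with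
source and target maps. -/
structure MDigraph where
  V : Type
  E : Type
  finV : Finite V
  finE : Finite E
  src : E → V
  tgt : E → V

attribute [instance] MDigraph.finV MDigraph.finE

namespace MDigraph

section Basic

variable (G : MDigraph)

/-- One undirected step between `u` and `v` along an edge from the set `F`. -/
def Step (F : Set G.E) (u v : G.V) : Prop :=
  ∃ e ∈ F, (G.src e = u ∧ G.tgt e = v) ∨ (G.src e = v ∧ G.tgt e = u)

/-- Undirected reachability (an undirected path) using only edges in `F`. -/
def Conn (F : Set G.E) (u v : G.V) : Prop :=
  Relation.ReflTransGen (G.Step F) u v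

/-- One directed step from `u` to `v` along an edge from the set `F`. -/
def DStep (F : Set G.E) (u v : G.V) : Prop :=
  ∃ e ∈ F, G.src e = u ∧ G.tgt e = v

/-- Directed reachability (a directed path) using only edges in `F`. -/
def DConn (F : Set G.E) (u v : G.V) : Prop :=
  Relation.ReflTransGen (G.DStep F) u v

/-- `u` is above (ancestral to) `v`: there is a directed path from `u` to `v`. -/
def Above (u v : G.V) : Prop := G.DConn Set.univ u v

/-- In-degree of a node. -/
noncomputable def inDeg (v : G.V) : ℕ := Nat.card {e : G.E // G.tgt e = v}

/-- Out-degree of a node. -/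
noncomputable def outDeg (v : G.V) : ℕ := Nat.card {e : G.E // G.src e = v}

/-- Undirected degree of a node (a loop counts twice). -/
noncomputable def degree (v : G.V) : ℕ := G.inDeg v + G.outDeg v

/-- The number of connected components of the graph with node set `W` and edge
set the restriction to `W` of `F` (two nodes of `W` lie in the same connected
component iff they are joined by an undirected path). -/
noncomputable def numComponents (W : Set G.V) (F : Set G.E) : ℕ :=
  Nat.card (Quot (fun u v : W => G.Step {e ∈ F | G.src e ∈ W ∧ G.tgt e ∈ W} u.1 v.1))

/-- `v` lies on every directed path from `u` to `w`: there is no directed path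
from `u` to `w` all of whose nodes avoid `v`. -/
def OnEveryPath (v u w : G.V) : Prop :=
  ¬ (u ≠ v ∧ w ≠ v ∧
      Relation.ReflTransGen (fun a b => G.DStep Set.univ a b ∧ a ≠ v ∧ b ≠ v) u w)

end Basic

/-- A subgraph (subnetwork): a set of nodes together with a set of edges
joining them. -/
structure Subgraph (G : MDigraph) where
  verts : Set G.V
  edges : Set G.E
  src_mem : ∀ e ∈ edges, G.src e ∈ verts
  tgt_mem : ∀ e ∈ edges, G.tgt e ∈ verts

/-- The whole graph, as a subgraph of itself. -/
def top (G : MDigraph) : Subgraph G :=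
  ⟨Set.univ, Set.univ, fun _ _ => Set.mem_univ _, fun _ _ => Set.mem_univ _⟩

namespace Subgraph

variable {G : MDigraph}

/-- Containment of subgraphs. -/
def le (H K : Subgraph G) : Prop := H.verts ⊆ K.verts ∧ H.edges ⊆ K.edges

/-- The subgraph `H` is connected. -/
def IsConnected (H : Subgraph G) : Prop :=
  H.verts.Nonempty ∧ ∀ u ∈ H.verts, ∀ v ∈ H.verts, G.Conn H.edges u v

/-- Delete an edge from a subgraph. -/
def deleteEdge (H : Subgraph G) (e : G.E) : Subgraph G :=
  ⟨H.verts, H.edges \ {e}, fun e' he' => H.src_mem e' he'.1,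
    fun e' he' => H.tgt_mem e' he'.1⟩

/-- The number of connected components of a subgraph. -/
noncomputable def numComponents (H : Subgraph G) : ℕ :=
  G.numComponents H.verts H.edges

/-- `e` is a cut edge of the (sub)graph `H`: deleting it increases the number
of connected components. -/
def IsCutEdge (H : Subgraph G) (e : G.E) : Prop :=
  e ∈ H.edges ∧ H.numComponents < (H.deleteEdge e).numComponents

end Subgraph

variable {G : MDigraph}

/-- `B` is a blob of the network `H`: a maximal connected subnetwork of `H`
having no cut edges.  (A blob is *trivial* if it consists of a single node.) -/
def IsBlobIn (H B : Subgraph G) : Prop :=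
  B.le H ∧ B.IsConnected ∧ (∀ e, ¬ B.IsCutEdge e) ∧
    ∀ B' : Subgraph G, B'.le H → B'.IsConnected → (∀ e, ¬ B'.IsCutEdge e) →
      B.le B' → B'.le B

/-- `e` is a cut edge of the network `H` incident to the blob `B`: exactly one
of its endpoints is a node of `B`. -/
def IncidentCut (H B : Subgraph G) (e : G.E) : Prop :=
  H.IsCutEdge e ∧ Xor' (G.src e ∈ B.verts) (G.tgt e ∈ B.verts)

/-- The blob `B` of the network `H` is determined by the set `S` of leaf
labels: deletion of the cut edges of `H` incident to `B` leaves the nodes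
labelled by the elements of `S` in distinct connected components. -/
def DeterminesIn {X : Type} (H B : Subgraph G) (leaf : X → G.V) (S : Set X) : Prop :=
  ∀ s ∈ S, ∀ t ∈ S, s ≠ t →
    ¬ G.Conn {e ∈ H.edges | ¬ IncidentCut H B e} (leaf s) (leaf t)

/-- Four taxa form a B-quartet on the network `H`: some blob of `H` is
determined by them. -/
def BQuartetIn {X : Type} (H : Subgraph G) (leaf : X → G.V) (a b c d : X) : Prop :=
  ∃ B : Subgraph G, IsBlobIn H B ∧ DeterminesIn H B leaf ({a, b, c, d} : Set X)

/-- Some cut edge of `H` separates the taxa `p, q` from the taxa `r, s`: after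
its deletion `p, q` lie in one connected component and `r, s` in another.  For
a 4-taxon set `{p,q,r,s}` this says exactly that the (reduced unrooted) tree of
blobs of `H` displays the resolved quartet `pq|rs` (the edges of the tree of
blobs correspond exactly to the cut edges of the network, and suppressing
degree-2 nodes or contracting blobs does not affect which taxa a cut edge
separates). -/
def CutSep {X : Type} (H : Subgraph G) (leaf : X → G.V) (p q r s : X) : Prop :=
  ∃ e, H.IsCutEdge e ∧
    G.Conn (H.edges \ {e}) (leaf p) (leaf q) ∧
    G.Conn (H.edges \ {e}) (leaf r) (leaf s) ∧
    ¬ G.Conn (H.edges \ {e}) (leaf p) (leaf r)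

end MDigraph
open MDigraph in
/-- A rooted binary phylogenetic network on the taxon set `X`: a connected
directed acyclic graph whose node set consists of a root (in-degree 0,
out-degree 2), leaves (in-degree 1, out-degree 0) bijectively labelled by `X`,
tree nodes (in-degree 1, out-degree 2) and hybrid nodes (in-degree 2,
out-degree 1). -/
structure PhyloNetwork (X : Type) extends MDigraph where
  root : toMDigraph.V
  leaf : X → toMDigraph.V
  leaf_inj : Function.Injective leaf
  root_in : toMDigraph.inDeg root = 0
  root_out : toMDigraph.outDeg root = 2
  leaf_in : ∀ x, toMDigraph.inDeg (leaf x) = 1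
  leaf_out : ∀ x, toMDigraph.outDeg (leaf x) = 0
  internal : ∀ v, v ≠ root → (∀ x, v ≠ leaf x) →
      (toMDigraph.inDeg v = 1 ∧ toMDigraph.outDeg v = 2) ∨
      (toMDigraph.inDeg v = 2 ∧ toMDigraph.outDeg v = 1)
  acyclic : ∀ v, ¬ Relation.TransGen (toMDigraph.DStep Set.univ) v v
  conn : ∀ u v, toMDigraph.Conn Set.univ u v

namespace PhyloNetwork

open MDigraph

variable {X : Type} (N : PhyloNetwork X)

/-- The subnetwork of `N⁺` consisting of all nodes and edges ancestral to at
least one taxon in `Y`.  Since suppressing nodes of in- and out-degree 1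
affects neither blobs, nor cut edges, nor which sets of taxa they separate,
this subnetwork faithfully represents the induced network `N⁺_Y`. -/
def inducedSub (Y : Set X) : Subgraph N.toMDigraph where
  verts := {v | ∃ y ∈ Y, N.toMDigraph.Above v (N.leaf y)}
  edges := {e | ∃ y ∈ Y, N.toMDigraph.Above (N.toMDigraph.tgt e) (N.leaf y)}
  src_mem := by
    rintro e ⟨y, hy, h⟩
    exact ⟨y, hy, Relation.ReflTransGen.head ⟨e, Set.mem_univ e, rfl, rfl⟩ h⟩
  tgt_mem := by
    rintro e ⟨y, hy, h⟩
    exact ⟨y, hy, h⟩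

/-- `v` is a stable ancestor of the leaves: it is ancestral to every leaf and
lies on every directed path from the root to any leaf. -/
def IsStableAncestor (v : N.toMDigraph.V) : Prop :=
  (∀ x, N.toMDigraph.Above v (N.leaf x)) ∧
  ∀ x, N.toMDigraph.OnEveryPath v N.root (N.leaf x)

/-- `v` is the lowest stable ancestor (LSA) of the network: a stable ancestor
below all stable ancestors. -/
def IsLSA (v : N.toMDigraph.V) : Prop :=
  N.IsStableAncestor v ∧ ∀ u, N.IsStableAncestor u → N.toMDigraph.Above u v

/-- The number of cut edges of `N⁺` incident to the blob `B`. -/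
noncomputable def blobDeg (B : Subgraph N.toMDigraph) : ℕ :=
  Nat.card {e : N.toMDigraph.E // IncidentCut (top N.toMDigraph) B e}

/-- `B` is an `m`-blob of the rooted network `N⁺`: if the root is not in `B`
then `B` has exactly `m` incident cut edges, while if the root is in `B` then
`B` has exactly `m - 1` incident cut edges. -/
def IsMBlob (B : Subgraph N.toMDigraph) (m : ℕ) : Prop :=
  IsBlobIn (top N.toMDigraph) B ∧
    ((N.root ∈ B.verts ∧ m = N.blobDeg B + 1) ∨ (N.root ∉ B.verts ∧ m = N.blobDeg B))

end PhyloNetwork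

open MDigraph

/-- The subnetwork of `N⁺` displayed by the selection `σ` of kept edges: after
deleting the non-selected hybrid edges, retain only nodes and edges from which
a taxon is reachable by a directed path (within `σ`).  Suppressing degree-2
nodes changes no cut-edge or separation structure, so this subnetwork
faithfully represents the displayed tree. -/
def dispSub {X : Type} (N : PhyloNetwork X) (σ : Set N.toMDigraph.E) :
    Subgraph N.toMDigraph where
  verts := {w | ∃ x, N.toMDigraph.DConn σ w (N.leaf x)}
  edges := {e | e ∈ σ ∧ ∃ x, N.toMDigraph.DConn σ (N.toMDigraph.tgt e) (N.leaf x)}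
  src_mem := by
    rintro e ⟨hσ, x, hx⟩
    exact ⟨x, Relation.ReflTransGen.head ⟨e, hσ, rfl, rfl⟩ hx⟩
  tgt_mem := by
    rintro e ⟨hσ, x, hx⟩
    exact ⟨x, hx⟩

/-- `σ` is a selection of edges defining a displayed tree: it contains every
tree edge (an edge whose child is not a hybrid node), and for each hybrid node
exactly one of its two incoming hybrid edges. -/
def IsSelection {X : Type} (N : PhyloNetwork X) (σ : Set N.toMDigraph.E) : Prop :=
  (∀ e, N.toMDigraph.inDeg (N.toMDigraph.tgt e) ≠ 2 → e ∈ σ) ∧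
  (∀ v, N.toMDigraph.inDeg v = 2 → ∃! e, N.toMDigraph.tgt e = v ∧ e ∈ σ)

/-!
A cut edge `e` separating `a, b` from `c, d` splits `N⁺ \ e` into a part containing
the root and a part containing the child of `e`. In a displayed tree every taxon is
reached from the root along kept edges; cutting that path after its last use of `e`
joins the taxon, without `e`, to the root or to the child of `e`, necessarily on the
same side as in `N⁺ \ e`. So `a, b` and `c, d` stay together in the displayed tree
minus `e`, while `a` and `c`, joined through the root, are separated only by `e`.
-/

namespace MDigraph

variable {G : MDigraph} {F F' : Set G.E} {u v : G.V}

theorem Step.symm (h : G.Step F u v) : G.Step F v u := by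
  obtain ⟨e, he, h⟩ := h
  exact ⟨e, he, h.symm⟩

theorem Conn.symm (h : G.Conn F u v) : G.Conn F v u := by
  induction h with
  | refl => exact .refl
  | tail _ hs ih => exact ih.head hs.symm

theorem Conn.mono (hF : F ⊆ F') (h : G.Conn F u v) : G.Conn F' u v :=
  Relation.ReflTransGen.mono (fun _ _ ⟨e, he, hends⟩ => ⟨e, hF he, hends⟩) _ _ h

theorem DConn.conn (h : G.DConn F u v) : G.Conn F u v :=
  Relation.ReflTransGen.mono (fun _ _ ⟨e, he, hs, ht⟩ => ⟨e, he, .inl ⟨hs, ht⟩⟩) _ _ h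

/-- Cut a directed path after its last use of `e`. -/
theorem DConn.conn_sdiff_or_conn_tgt (e : G.E) (h : G.DConn F u v) :
    G.Conn (F \ {e}) u v ∨ G.Conn (F \ {e}) (G.tgt e) v := by
  induction h with
  | refl => exact .inl .refl
  | @tail w x _ hstep ih =>
    obtain ⟨e', he', hs, ht⟩ := hstep
    by_cases hee' : e' = e
    · subst hee'
      exact .inr (ht ▸ .refl)
    · have hstep' : G.Step (F \ {e}) w x := ⟨e', ⟨he', hee'⟩, .inl ⟨hs, ht⟩⟩
      exact ih.imp (·.tail hstep') (·.tail hstep')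

theorem Conn.sdiff_of_conn_ends {e : G.E} (h : G.Conn F u v)
    (he : G.Conn (F \ {e}) (G.src e) (G.tgt e)) : G.Conn (F \ {e}) u v := by
  induction h with
  | refl => exact .refl
  | @tail w x _ hstep ih =>
    obtain ⟨e', he', hends⟩ := hstep
    by_cases hee' : e' = e
    · subst hee'
      rcases hends with ⟨rfl, rfl⟩ | ⟨rfl, rfl⟩
      exacts [ih.trans he, ih.trans he.symm]
    · exact ih.tail ⟨e', ⟨he', hee'⟩, hends⟩

theorem Conn.of_separated (hF : F' ⊆ F) {r t : G.V} (hrt : ¬ G.Conn F r t)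
    (hu : G.Conn F' r u ∨ G.Conn F' t u) (hv : G.Conn F' r v ∨ G.Conn F' t v)
    (huv : G.Conn F u v) : G.Conn F' u v := by
  rcases hu with hu | hu <;> rcases hv with hv | hv
  · exact hu.symm.trans hv
  · exact absurd (((hu.mono hF).trans huv).trans (hv.mono hF).symm) hrt
  · exact absurd (((hv.mono hF).trans huv.symm).trans (hu.mono hF).symm) hrt
  · exact hu.symm.trans hv

namespace Subgraph

variable (H : Subgraph G)

theorem numComponents_eq_card :
    H.numComponents = Nat.card (Quot fun x y : H.verts => G.Step H.edges x y) := by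
  have hedges : {e ∈ H.edges | G.src e ∈ H.verts ∧ G.tgt e ∈ H.verts} = H.edges :=
    Set.sep_eq_self_iff_mem_true.mpr fun e he => ⟨H.src_mem e he, H.tgt_mem e he⟩
  rw [numComponents, MDigraph.numComponents, hedges]

variable {H}

theorem conn_of_quot_mk_eq {x y : H.verts}
    (h : Quot.mk (fun x y : H.verts => G.Step H.edges x y) x = Quot.mk _ y) :
    G.Conn H.edges x y := by
  have hgen := Quot.eqvGen_exact h
  clear h
  induction hgen with
  | rel _ _ hxy => exact .single hxy
  | refl => exact .refl
  | symm _ _ _ ih => exact ih.symm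
  | trans _ _ _ _ _ ih₁ ih₂ => exact ih₁.trans ih₂

theorem quot_mk_eq_of_conn (hu : u ∈ H.verts) (h : G.Conn H.edges u v) :
    ∃ hv : v ∈ H.verts, Quot.mk (fun x y : H.verts => G.Step H.edges x y) ⟨u, hu⟩ =
      Quot.mk _ ⟨v, hv⟩ := by
  induction h with
  | refl => exact ⟨hu, rfl⟩
  | @tail w x _ hstep ih =>
    obtain ⟨hw, hmk⟩ := ih
    obtain ⟨e, he, hends⟩ := hstep
    have hx : x ∈ H.verts := by
      rcases hends with ⟨-, rfl⟩ | ⟨rfl, -⟩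
      exacts [H.tgt_mem e he, H.src_mem e he]
    exact ⟨hx, hmk.trans (Quot.sound (⟨e, he, hends⟩ : G.Step H.edges w x))⟩

/-- The components after the deletion map onto those before, so the count goes up
exactly when this map is not injective. -/
theorem numComponents_lt_deleteEdge_iff {e : G.E} :
    H.numComponents < (H.deleteEdge e).numComponents ↔ ∃ u ∈ H.verts, ∃ v ∈ H.verts,
      G.Conn H.edges u v ∧ ¬ G.Conn (H.edges \ {e}) u v := by
  let f : Quot (fun x y : H.verts => G.Step (H.edges \ {e}) x y) →
      Quot (fun x y : H.verts => G.Step H.edges x y) :=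
    Quot.map id fun _ _ ⟨e', he', hends⟩ => ⟨e', he'.1, hends⟩
  have hf : Function.Surjective f := Quot.ind fun x => ⟨Quot.mk _ x, rfl⟩
  have hlt : Nat.card (Quot fun x y : H.verts => G.Step H.edges x y) <
      Nat.card (Quot fun x y : H.verts => G.Step (H.edges \ {e}) x y) ↔
      ¬ Function.Injective f := by
    constructor
    · intro hcard hinj
      exact hcard.ne' ((Nat.bijective_iff_surjective_and_card f).mp ⟨hinj, hf⟩).2
    · intro hinj
      refine (Nat.card_le_card_of_surjective f hf).lt_of_ne fun hcard => hinj ?_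
      exact ((Nat.bijective_iff_surjective_and_card f).mpr ⟨hf, hcard.symm⟩).1
  rw [numComponents_eq_card, numComponents_eq_card (H.deleteEdge e)]
  refine hlt.trans ?_
  constructor
  · intro hinj
    simp only [Function.Injective, not_forall] at hinj
    obtain ⟨x, y, hxy, hne⟩ := hinj
    induction x using Quot.ind with | _ x
    induction y using Quot.ind with | _ y
    refine ⟨x, x.2, y, y.2, conn_of_quot_mk_eq hxy, fun hsep => hne ?_⟩
    obtain ⟨_, hmk⟩ := quot_mk_eq_of_conn (H := H.deleteEdge e) x.2 hsep
    exact hmk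
  · rintro ⟨u, hu, v, hv, huv, hsep⟩ hinj
    obtain ⟨_, hmk⟩ := quot_mk_eq_of_conn hu huv
    exact hsep (conn_of_quot_mk_eq (H := H.deleteEdge e) (hinj hmk))

theorem isCutEdge_iff {e : G.E} :
    H.IsCutEdge e ↔ ∃ u ∈ H.verts, ∃ v ∈ H.verts,
      G.Conn H.edges u v ∧ ¬ G.Conn (H.edges \ {e}) u v := by
  rw [IsCutEdge, numComponents_lt_deleteEdge_iff, and_iff_right_of_imp]
  rintro ⟨u, -, v, -, huv, hsep⟩
  by_contra he
  rw [Set.sdiff_singleton_eq_self he] at hsep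
  exact hsep huv

theorem IsCutEdge.not_conn_ends {e : G.E} (he : H.IsCutEdge e) :
    ¬ G.Conn (H.edges \ {e}) (G.src e) (G.tgt e) := by
  intro hends
  obtain ⟨u, -, v, -, huv, hsep⟩ := isCutEdge_iff.mp he
  exact hsep (huv.sdiff_of_conn_ends hends)

end Subgraph

end MDigraph

namespace PhyloNetwork

variable {X : Type} (N : PhyloNetwork X)

theorem wellFounded_dStep : WellFounded (N.DStep Set.univ) :=
  have : IsTrans N.V (Relation.TransGen (N.DStep Set.univ)) := ⟨fun _ _ _ => .trans⟩
  have : Std.Irrefl (Relation.TransGen (N.DStep Set.univ)) := ⟨N.acyclic⟩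
  Subrelation.wf (fun h => Relation.TransGen.single h) (Finite.wellFounded_of_trans_of_irrefl _)

variable {N}

theorem exists_tgt_eq {v : N.V} (hv : v ≠ N.root) : ∃ e, N.tgt e = v := by
  have hin : N.inDeg v ≠ 0 := by
    by_cases hleaf : ∃ x, v = N.leaf x
    · obtain ⟨x, rfl⟩ := hleaf
      simp [N.leaf_in]
    · rcases N.internal v hv fun x hx => hleaf ⟨x, hx⟩ with ⟨h, -⟩ | ⟨h, -⟩ <;> omega
  obtain ⟨⟨e, he⟩⟩ := (Nat.card_ne_zero.mp hin).1
  exact ⟨e, he⟩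

theorem dConn_root {F : Set N.E} (hF : ∀ v ≠ N.root, ∃ e ∈ F, N.tgt e = v) (v : N.V) :
    N.DConn F N.root v := by
  induction v using N.wellFounded_dStep.induction with
  | _ v ih =>
    by_cases hv : v = N.root
    · exact hv ▸ .refl
    · obtain ⟨e, he, rfl⟩ := hF v hv
      exact (ih (N.src e) ⟨e, trivial, rfl, rfl⟩).tail ⟨e, he, rfl, rfl⟩

theorem _root_.IsSelection.exists_mem_tgt_eq {σ : Set N.E} (hσ : IsSelection N σ) {v : N.V}
    (hv : v ≠ N.root) : ∃ e ∈ σ, N.tgt e = v := by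
  by_cases hhyb : N.inDeg v = 2
  · obtain ⟨e, ⟨he, hσe⟩, -⟩ := hσ.2 v hhyb
    exact ⟨e, hσe, he⟩
  · obtain ⟨e, rfl⟩ := exists_tgt_eq hv
    exact ⟨e, hσ.1 e hhyb, rfl⟩

theorem not_conn_root_tgt_of_isCutEdge {e : N.E} (he : (top N.toMDigraph).IsCutEdge e) :
    ¬ N.Conn (Set.univ \ {e}) N.root (N.tgt e) := by
  intro hroot
  have hends := he.not_conn_ends
  have hpath :=
    N.dConn_root (fun _ hv => (exists_tgt_eq hv).imp fun _ h => ⟨trivial, h⟩) (N.src e)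
  rcases hpath.conn_sdiff_or_conn_tgt e with hsrc | hsrc
  · exact hends (hsrc.symm.trans hroot)
  · exact hends hsrc.symm

theorem dConn_dispSub_of_dConn {σ : Set N.E} {u : N.V} {x : X}
    (h : N.DConn σ u (N.leaf x)) : N.DConn (dispSub N σ).edges u (N.leaf x) := by
  induction h using Relation.ReflTransGen.head_induction_on with
  | refl => exact .refl
  | head hstep hrest ih =>
    obtain ⟨e, he, hs, rfl⟩ := hstep
    exact .head ⟨e, ⟨he, x, hrest⟩, hs, rfl⟩ ih

end PhyloNetwork

theorem stmt_13_general {X : Type} (N : PhyloNetwork X) (a b c d : X)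
    (hq : CutSep (top N.toMDigraph) N.leaf a b c d)
    (σ : Set N.toMDigraph.E) (hσ : IsSelection N σ) :
    CutSep (dispSub N σ) N.leaf a b c d := by
  obtain ⟨e, hcut, hab, hcd, hac⟩ := hq
  set D := dispSub N σ
  have hroot (x : X) : N.DConn D.edges N.root (N.leaf x) :=
    PhyloNetwork.dConn_dispSub_of_dConn (N.dConn_root (fun _ => hσ.exists_mem_tgt_eq) _)
  have hsub : D.edges \ {e} ⊆ Set.univ \ {e} := Set.sdiff_subset_sdiff_left (Set.subset_univ _)
  have hsides {x y : X} (hxy : N.Conn (Set.univ \ {e}) (N.leaf x) (N.leaf y)) :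
      N.Conn (D.edges \ {e}) (N.leaf x) (N.leaf y) :=
    hxy.of_separated hsub (PhyloNetwork.not_conn_root_tgt_of_isCutEdge hcut)
      ((hroot x).conn_sdiff_or_conn_tgt e) ((hroot y).conn_sdiff_or_conn_tgt e)
  have hac' : ¬ N.Conn (D.edges \ {e}) (N.leaf a) (N.leaf c) := fun h => hac (h.mono hsub)
  refine ⟨e, ?_, hsides hab, hsides hcd, hac'⟩
  exact D.isCutEdge_iff.mpr ⟨N.leaf a, ⟨a, .refl⟩, N.leaf c, ⟨c, .refl⟩,
    (hroot a).conn.symm.trans (hroot c).conn, hac'⟩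

/-- Let `N⁺` be a rooted binary phylogenetic network on exactly the four taxa
`{a,b,c,d}` that is a T-quartet, with associated resolved quartet `ab|cd`
(the quartet displayed on `T_rd(N⁻)`, i.e. some cut edge of the network
separates `a, b` from `c, d`).  Then every tree displayed on `N⁺` has
unrooted quartet topology `ab|cd`; equivalently, all displayed trees of `N⁺`
share the same resolved quartet topology. -/
theorem stmt_13 {X : Type} (N : PhyloNetwork X) (a b c d : X)
    (hX : ∀ x : X, x = a ∨ x = b ∨ x = c ∨ x = d)
    (hpair : List.Pairwise (· ≠ ·) [a, b, c, d])
    (hT : ¬ BQuartetIn (top N.toMDigraph) N.leaf a b c d)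
    (hq : CutSep (top N.toMDigraph) N.leaf a b c d)
    (σ : Set N.toMDigraph.E) (hσ : IsSelection N σ) :
    CutSep (dispSub N σ) N.leaf a b c d :=
  stmt_13_general N a b c d hq σ hσ
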